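/- arXiv:2311.10237 — 4 statements merged into one kernel-verified Lean document; each statement's English description precedes it below -/
import Mathlib

section
/- (Wraparound soundness, large-coordinate case.) Let d ∈ ℕ, B ≥ 0, α > 0, and let q be a real number with q > 4α√B. Let X ∈ ℤ^d with |X_i| ≤ q/2 for all i, and suppose there exists an index i* with |X_{i*}| > 2α√B. Let Z₁,…,Z_d be independent random variables, each equal to 1 with probability 1/4, to −1 with probability 1/4, and to 0 with probability 1/2, and set Y = ∑_{i=1}^d Z_i X_i. Then the probability that there exists an integer t with Y − t·q ∈ [−α√B, α√B] is at most 1/2. -/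
/-!
Pick a coordinate `i` with `2α√B < |X i| ≤ q/2` and write `Y = W + Z i * X i` with `W`
independent of `Z i`. Call `y` bad if it lies within `α√B` of `ℤ q`. Two bad points are within
`2α√B` of a multiple of `q` of each other, whereas `X i` is farther than `2α√B` from every
multiple of `q`; so the event `W bad` is disjoint from `W + X i bad` and from `W - X i bad`, and
conditioning on `Z i` gives
`P(Y bad) = (P(W + X i bad) + P(W bad)) / 4 + (P(W - X i bad) + P(W bad)) / 4 ≤ 1/4 + 1/4`.
-/

open MeasureTheory ProbabilityTheory Finset
open scoped ENNReal

def nearIntMultiples (q a : ℝ) : Set ℝ := {y | ∃ t : ℤ, y - t * q ∈ Set.Icc (-a) a}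

lemma measurableSet_nearIntMultiples (q a : ℝ) : MeasurableSet (nearIntMultiples q a) := by
  simp only [nearIntMultiples, Set.ofPred_exists]
  exact .iUnion fun t => measurableSet_Icc.preimage (measurable_id.sub_const _)

lemma add_notMem_nearIntMultiples {q a c y : ℝ} (hac : 2 * a < |c|) (hcq : 2 * |c| ≤ q)
    (hy : y ∈ nearIntMultiples q a) : y + c ∉ nearIntMultiples q a := by
  rintro ⟨t₁, ht₁, ht₁'⟩
  obtain ⟨t₀, ht₀, ht₀'⟩ := hy
  have hclose : |c - ((t₁ - t₀ : ℤ) : ℝ) * q| ≤ 2 * a := by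
    push_cast
    rw [abs_le]
    constructor <;> linarith
  rcases eq_or_ne t₁ t₀ with rfl | hne
  · simp only [sub_self, Int.cast_zero, zero_mul, sub_zero] at hclose
    linarith
  · have hq : 0 ≤ q := by linarith [abs_nonneg c]
    have hk : (1 : ℝ) ≤ |((t₁ - t₀ : ℤ) : ℝ)| := by
      exact_mod_cast Int.one_le_abs (sub_ne_zero.mpr hne)
    have hkq : q ≤ |((t₁ - t₀ : ℤ) : ℝ) * q| := by
      rw [abs_mul, abs_of_nonneg hq]
      nlinarith
    have := abs_sub_abs_le_abs_sub (((t₁ - t₀ : ℤ) : ℝ) * q) c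
    rw [abs_sub_comm] at this
    linarith

section Probability

variable {Ω : Type*} [MeasurableSpace Ω] {μ : Measure Ω}

lemma measure_le_sum_inter_preimage_singleton {β : Type*} {V : Ω → β} {s : Finset β}
    (hV : ∀ᵐ ω ∂μ, V ω ∈ s) (A : Set Ω) : μ A ≤ ∑ v ∈ s, μ (A ∩ V ⁻¹' {v}) :=
  calc μ A ≤ μ (⋃ v ∈ s, A ∩ V ⁻¹' {v}) :=
        measure_mono_ae <| hV.mono fun ω hω hA => Set.mem_iUnion₂.2 ⟨V ω, hω, hA, rfl⟩
    _ ≤ ∑ v ∈ s, μ (A ∩ V ⁻¹' {v}) := measure_biUnion_finset_le s _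

lemma ProbabilityTheory.IndepFun.measure_add_mul_mem_inter_eq {W V : Ω → ℝ}
    (hWV : IndepFun W V μ) {S : Set ℝ} (hS : MeasurableSet S) (c v : ℝ) :
    μ ({ω | W ω + V ω * c ∈ S} ∩ V ⁻¹' {v}) = μ {ω | W ω + v * c ∈ S} * μ (V ⁻¹' {v}) := by
  have hfiber : {ω | W ω + V ω * c ∈ S} ∩ V ⁻¹' {v}
      = W ⁻¹' {w | w + v * c ∈ S} ∩ V ⁻¹' {v} := by
    ext ω
    simp +contextual only [Set.mem_inter_iff, Set.mem_ofPred_eq, Set.mem_preimage,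
      Set.mem_singleton_iff, and_congr_left_iff, implies_true]
  rw [hfiber]
  exact hWV.measure_inter_preimage_eq_mul _ _ (measurable_add_const _ hS)
    (measurableSet_singleton v)

lemma ProbabilityTheory.iIndepFun.indepFun_sum_erase_mul {ι : Type*} [Fintype ι] [DecidableEq ι]
    {Z : ι → Ω → ℝ} (hZ : iIndepFun Z μ) (hmeas : ∀ i, Measurable (Z i)) (X : ι → ℝ) (i : ι) :
    IndepFun (fun ω => ∑ j ∈ univ.erase i, Z j ω * X j) (Z i) μ := by
  have hsplit := hZ.indepFun_finset (univ.erase i) {i}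
    (disjoint_singleton_right.2 (notMem_erase i _)) hmeas
  have hsum : Measurable fun z : ↥(univ.erase i) → ℝ => ∑ j, z j * X j := by fun_prop
  have heval : Measurable fun z : ({i} : Finset ι) → ℝ => z ⟨i, mem_singleton_self i⟩ :=
    measurable_pi_apply _
  convert hsplit.comp hsum heval using 1
  · ext ω
    exact (sum_coe_sort (univ.erase i) fun j => Z j ω * X j).symm
  · rfl

variable [IsProbabilityMeasure μ]

lemma ae_mem_of_sum_measure_preimage_singleton_eq_one {β : Type*} [MeasurableSpace β]
    [MeasurableSingletonClass β] {V : Ω → β} (hV : Measurable V) {s : Finset β}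
    (h : ∑ v ∈ s, μ (V ⁻¹' {v}) = 1) : ∀ᵐ ω ∂μ, V ω ∈ s := by
  rw [sum_measure_preimage_singleton s fun v _ => hV (measurableSet_singleton v)] at h
  exact (mem_ae_iff_prob_eq_one (hV s.measurableSet)).2 h

lemma measure_preimage_add_measure_preimage_le_one {α : Type*} [MeasurableSpace α] {W : Ω → α}
    (hW : Measurable W) {S T : Set α} (hT : MeasurableSet T) (hST : Disjoint S T) :
    μ (W ⁻¹' S) + μ (W ⁻¹' T) ≤ 1 :=
  calc μ (W ⁻¹' S) + μ (W ⁻¹' T) = μ (W ⁻¹' S ∪ W ⁻¹' T) :=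
        (measure_union (hST.preimage W) (hW hT)).symm
    _ ≤ 1 := prob_le_one

theorem measure_add_mul_mem_le_half {W V : Ω → ℝ} (hW : Measurable W) (hV : Measurable V)
    (hWV : IndepFun W V μ) {S : Set ℝ} (hS : MeasurableSet S) {c : ℝ}
    (hSc : ∀ y ∈ S, y + c ∉ S) (hone : μ (V ⁻¹' {1}) = 1 / 4)
    (hnegone : μ (V ⁻¹' {-1}) = 1 / 4) (hzero : μ (V ⁻¹' {0}) = 1 / 2) :
    μ {ω | W ω + V ω * c ∈ S} ≤ 1 / 2 := by
  have hquarters : (1 / 4 + 1 / 4 : ℝ≥0∞) = 1 / 2 := by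
    rw [ENNReal.div_add_div_same, one_add_one_eq_two, ENNReal.div_eq_div_iff] <;> norm_num
  have hvalues : ∀ᵐ ω ∂μ, V ω ∈ ({1, -1, 0} : Finset ℝ) := by
    refine ae_mem_of_sum_measure_preimage_singleton_eq_one hV ?_
    rw [sum_insert (by norm_num), sum_insert (by norm_num), sum_singleton, hone, hnegone, hzero,
      ← add_assoc, hquarters, ENNReal.add_halves]
  have hplus : μ {ω | W ω + c ∈ S} + μ {ω | W ω ∈ S} ≤ 1 :=
    measure_preimage_add_measure_preimage_le_one hW hS
      (Set.disjoint_left.2 fun y hy hy' => hSc y hy' hy)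
  have hminus : μ {ω | W ω + -c ∈ S} + μ {ω | W ω ∈ S} ≤ 1 :=
    measure_preimage_add_measure_preimage_le_one hW hS
      (Set.disjoint_left.2 fun y hy hy' => hSc (y + -c) hy (by simpa using hy'))
  calc μ {ω | W ω + V ω * c ∈ S}
      ≤ ∑ v ∈ ({1, -1, 0} : Finset ℝ), μ ({ω | W ω + V ω * c ∈ S} ∩ V ⁻¹' {v}) :=
        measure_le_sum_inter_preimage_singleton hvalues _
    _ = μ {ω | W ω + c ∈ S} * (1 / 4) + μ {ω | W ω + -c ∈ S} * (1 / 4)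
          + μ {ω | W ω ∈ S} * (1 / 2) := by
        simp only [hWV.measure_add_mul_mem_inter_eq hS]
        rw [sum_insert (by norm_num), sum_insert (by norm_num), sum_singleton]
        simp only [one_mul, neg_one_mul, zero_mul, add_zero]
        rw [hone, hnegone, hzero, add_assoc]
    _ = (μ {ω | W ω + c ∈ S} + μ {ω | W ω ∈ S}) * (1 / 4)
          + (μ {ω | W ω + -c ∈ S} + μ {ω | W ω ∈ S}) * (1 / 4) := by
        rw [← hquarters]
        ring
    _ ≤ 1 * (1 / 4) + 1 * (1 / 4) := by gcongr
    _ = 1 / 2 := by rw [one_mul, hquarters]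

end Probability

theorem wraparound_soundness_large_max_general
    {Ω : Type*} [MeasureSpace Ω] [IsProbabilityMeasure (ℙ : Measure Ω)]
    (d : ℕ) (B α q : ℝ)
    (X : Fin d → ℤ) (hbound : ∀ i, |(X i : ℝ)| ≤ q / 2)
    (hlarge : ∃ istar : Fin d, 2 * α * Real.sqrt B < |(X istar : ℝ)|)
    (Z : Fin d → Ω → ℝ)
    (hZmeas : ∀ i, Measurable (Z i))
    (hindep : iIndepFun Z ℙ)
    (hone : ∀ i, ℙ {ω | Z i ω = 1} = 1/4)
    (hnegone : ∀ i, ℙ {ω | Z i ω = -1} = 1/4)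
    (hzero : ∀ i, ℙ {ω | Z i ω = 0} = 1/2) :
    ℙ {ω | ∃ t : ℤ, (∑ i, Z i ω * (X i : ℝ)) - (t : ℝ) * q
        ∈ Set.Icc (-(α * Real.sqrt B)) (α * Real.sqrt B)} ≤ 1/2 := by
  obtain ⟨i, hi⟩ := hlarge
  have hsplit : ∀ ω, ∑ j, Z j ω * (X j : ℝ)
      = ∑ j ∈ univ.erase i, Z j ω * (X j : ℝ) + Z i ω * X i :=
    fun ω => (add_sum_erase _ _ (mem_univ i)).symm.trans (add_comm _ _)
  simp only [hsplit]
  refine measure_add_mul_mem_le_half (S := nearIntMultiples q (α * √B))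
    (measurable_sum _ fun j _ => (hZmeas j).mul_const _) (hZmeas i)
    (hindep.indepFun_sum_erase_mul hZmeas _ i) (measurableSet_nearIntMultiples _ _)
    (fun y hy => add_notMem_nearIntMultiples ?_ ?_ hy) (hone i) (hnegone i) (hzero i)
  · rwa [← mul_assoc]
  · linarith [hbound i]

/-- **wraparound soundness, large-coordinate case.** Let `q > 4α√B` and let
`X ∈ ℤ^d` with `|X i| ≤ q/2` for all `i` and `|X i⋆| > 2α√B` for some index `i⋆`. For
`Y = ∑ i, Z i * X i` with `Z₁, …, Z_d` independent (`1` w.p. `1/4`, `-1` w.p. `1/4`,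
`0` w.p. `1/2`), the probability that some integer `t` satisfies
`Y - t q ∈ [-α√B, α√B]` is at most `1/2`. -/
theorem wraparound_soundness_large_max
    {Ω : Type*} [MeasureSpace Ω] [IsProbabilityMeasure (ℙ : Measure Ω)]
    (d : ℕ) (B α q : ℝ) (hB : 0 ≤ B) (hα : 0 < α)
    (hq : 4 * α * Real.sqrt B < q)
    (X : Fin d → ℤ) (hbound : ∀ i, |(X i : ℝ)| ≤ q / 2)
    (hlarge : ∃ istar : Fin d, 2 * α * Real.sqrt B < |(X istar : ℝ)|)
    (Z : Fin d → Ω → ℝ)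
    (hZmeas : ∀ i, Measurable (Z i))
    (hindep : iIndepFun Z ℙ)
    (hone : ∀ i, ℙ {ω | Z i ω = 1} = 1/4)
    (hnegone : ∀ i, ℙ {ω | Z i ω = -1} = 1/4)
    (hzero : ∀ i, ℙ {ω | Z i ω = 0} = 1/2) :
    ℙ {ω | ∃ t : ℤ, (∑ i, Z i ω * (X i : ℝ)) - (t : ℝ) * q
        ∈ Set.Icc (-(α * Real.sqrt B)) (α * Real.sqrt B)} ≤ 1/2 :=
  wraparound_soundness_large_max_general d B α q X hbound hlarge Z hZmeas hindep hone hnegone hzero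
end

section
/- (Range-check soundness.) Let β₁ ≤ β₂ be integers, let q be an integer with q > 3(β₂ − β₁) + 2, and let b = ⌈log₂(β₂ − β₁ + 1)⌉. Let v₀,…,v_{b−1} and u₀,…,u_{b−1} be elements of {0,1}, and let w be an integer. Suppose (∑_{j=0}^{b−1} v_j·2^j) + (∑_{j=0}^{b−1} u_j·2^j) ≡ β₂ − β₁ (mod q) and w − β₁ ≡ ∑_{j=0}^{b−1} v_j·2^j (mod q). Then w is congruent modulo q to an integer in the interval [β₁, β₂]; in fact w ≡ β₁ + ∑_{j=0}^{b−1} v_j·2^j (mod q) and 0 ≤ ∑_{j=0}^{b−1} v_j·2^j ≤ β₂ − β₁. -/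
lemma clog2_le_two_mul (n : ℕ) (hn : 1 ≤ n) : 2 ^ Nat.clog 2 n ≤ 2 * n := by
  rcases eq_or_lt_of_le hn with h | h
  · simp [← h]
  · have h1 := Nat.pow_pred_clog_lt_self (b := 2) one_lt_two h
    rcases Nat.eq_zero_or_pos (Nat.clog 2 n) with h0 | h0
    · simp [h0]; omega
    · obtain ⟨c, hc⟩ := Nat.exists_eq_add_of_le h0
      rw [hc] at h1 ⊢
      simp only [Nat.pred_succ, Nat.add_comm 1 c] at h1 ⊢
      rw [pow_succ]
      omega

lemma my_geom_sum_two (b : ℕ) : ∑ i ∈ Finset.range b, (2:ℤ) ^ i = 2 ^ b - 1 := by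
  induction b with
  | zero => simp
  | succ n ih => rw [Finset.sum_range_succ, ih]; ring

lemma bit_sum_bounds {b : ℕ} (v : Fin b → ℤ) (hv : ∀ j, v j = 0 ∨ v j = 1) :
    0 ≤ (∑ j, v j * 2 ^ (j : ℕ)) ∧ (∑ j, v j * 2 ^ (j : ℕ)) ≤ 2 ^ b - 1 := by
  constructor
  · apply Finset.sum_nonneg
    intro j _
    rcases hv j with h | h <;> simp [h] <;> positivity
  · have h1 : (∑ j, v j * 2 ^ (j : ℕ)) ≤ ∑ j : Fin b, (2:ℤ) ^ (j : ℕ) := by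
      apply Finset.sum_le_sum
      intro j _
      rcases hv j with h | h <;> simp [h] <;> positivity
    have h2 : ∑ j : Fin b, (2:ℤ) ^ (j : ℕ) = 2 ^ b - 1 := by
      rw [Fin.sum_univ_eq_sum_range]
      exact my_geom_sum_two b
    omega

/-- **range-check soundness.** Let `β₁ ≤ β₂` be integers, let
`q > 3(β₂ - β₁) + 2`, and let `b = ⌈log₂ (β₂ - β₁ + 1)⌉`. Given bits
`v₀, …, v_{b-1}, u₀, …, u_{b-1} ∈ {0,1}` and an integer `w` such that
`(∑ v_j 2^j) + (∑ u_j 2^j) ≡ β₂ - β₁ (mod q)` and `w - β₁ ≡ ∑ v_j 2^j (mod q)`,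
the integer `w` is congruent modulo `q` to an integer in `[β₁, β₂]`; in fact
`w ≡ β₁ + ∑ v_j 2^j (mod q)` and `0 ≤ ∑ v_j 2^j ≤ β₂ - β₁`. -/
theorem range_check_soundness
    (β₁ β₂ q : ℤ) (hβ : β₁ ≤ β₂) (hq : 3 * (β₂ - β₁) + 2 < q)
    (v u : Fin (Nat.clog 2 (β₂ - β₁ + 1).toNat) → ℤ)
    (hv : ∀ j, v j = 0 ∨ v j = 1) (hu : ∀ j, u j = 0 ∨ u j = 1)
    (w : ℤ)
    (hsum : (∑ j, v j * 2 ^ (j : ℕ)) + (∑ j, u j * 2 ^ (j : ℕ)) ≡ β₂ - β₁ [ZMOD q])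
    (hw : w - β₁ ≡ ∑ j, v j * 2 ^ (j : ℕ) [ZMOD q]) :
    (∃ m : ℤ, β₁ ≤ m ∧ m ≤ β₂ ∧ w ≡ m [ZMOD q]) ∧
      w ≡ β₁ + ∑ j, v j * 2 ^ (j : ℕ) [ZMOD q] ∧
      0 ≤ ∑ j, v j * 2 ^ (j : ℕ) ∧ (∑ j, v j * 2 ^ (j : ℕ)) ≤ β₂ - β₁ := by
  obtain ⟨hv0, hv1⟩ := bit_sum_bounds v hv
  obtain ⟨hu0, hu1⟩ := bit_sum_bounds u hu
  have hD0 : (0:ℤ) ≤ β₂ - β₁ := by omega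
  have hpow : (2:ℤ) ^ Nat.clog 2 (β₂ - β₁ + 1).toNat ≤ 2 * (β₂ - β₁ + 1) := by
    have h := clog2_le_two_mul (β₂ - β₁ + 1).toNat (by omega)
    have h2 : ((2 ^ Nat.clog 2 (β₂ - β₁ + 1).toNat : ℕ) : ℤ)
        ≤ ((2 * (β₂ - β₁ + 1).toNat : ℕ) : ℤ) := by exact_mod_cast h
    push_cast at h2
    omega
  have hdvd : q ∣ (β₂ - β₁) - ((∑ j, v j * 2 ^ (j : ℕ)) + (∑ j, u j * 2 ^ (j : ℕ))) :=
    hsum.dvd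
  obtain ⟨k, hk⟩ := hdvd
  have hk0 : k = 0 := by
    rcases lt_trichotomy k 0 with h | h | h
    · nlinarith
    · exact h
    · nlinarith
  rw [hk0, mul_zero] at hk
  have hle : (∑ j, v j * 2 ^ (j : ℕ)) ≤ β₂ - β₁ := by omega
  have hw' : w ≡ β₁ + ∑ j, v j * 2 ^ (j : ℕ) [ZMOD q] := by
    have := hw.add_right β₁
    simpa [sub_add_cancel, add_comm] using this
  refine ⟨⟨β₁ + ∑ j, v j * 2 ^ (j : ℕ), by omega, by omega, hw'⟩, hw', hv0, hle⟩
end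

section
/- (Chi-square tail bound, Laurent–Massart.) Let k ∈ ℕ, k ≥ 1, and let G₁,…,G_k be independent standard Gaussian random variables (mean 0, variance 1). Then for every β > 0: Pr[ ∑_{i=1}^k G_i² ≥ k + 2√(βk) + 2β ] ≤ e^{−β}. Equivalently, a chi-square random variable Z with k degrees of freedom satisfies Pr[ Z/k ≥ 1 + 2√(β/k) + 2β/k ] ≤ e^{−β}. -/
/-!
Chernoff's method. A standard Gaussian `G` has `𝔼[exp (t G²)] = (1 - 2t)^(-1/2)` for `t < 1/2`,
so by independence `ℙ[∑ Gᵢ² ≥ c k] ≤ (exp (-t c) (1 - 2t)^(-1/2))^k`, which at the optimal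
`t = (c - 1) / (2c)` equals `(exp (-(c - 1)/2) √c)^k`. Writing `c = 1 + 2s + 2s²` with `s = √(β/k)`,
the inequality `1 + 2s + 2s² ≤ exp (2s)` bounds this by `exp (-s²)^k = exp (-β)`.
-/

open MeasureTheory ProbabilityTheory Real

lemma exp_neg_add_sq_mul_sqrt_le {s : ℝ} (hs : 0 ≤ s) :
    exp (-(s + s ^ 2)) * √(1 + 2 * s + 2 * s ^ 2) ≤ exp (-s ^ 2) := by
  have hquad : 1 + 2 * s + 2 * s ^ 2 ≤ exp s ^ 2 := by
    rw [← exp_nat_mul]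
    convert quadratic_le_exp_of_nonneg (by positivity : 0 ≤ 2 * s) using 1 <;> push_cast <;> ring
  calc _ ≤ exp (-(s + s ^ 2)) * exp s := by gcongr; exact sqrt_le_iff.2 ⟨(exp_pos s).le, hquad⟩
    _ = exp (-s ^ 2) := by rw [← exp_add]; ring_nf

namespace ProbabilityTheory

/-- For `t ≥ 1/2` both sides are junk `0`: `exp (t x²)` is not integrable and `√(1 - 2t) = 0`. -/
lemma mgf_sq_gaussianReal (t : ℝ) :
    mgf (· ^ 2) (gaussianReal 0 1) t = (√(1 - 2 * t))⁻¹ := by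
  have hpdf (x : ℝ) : gaussianPDFReal 0 1 x * exp (t * x ^ 2)
      = (√(2 * π))⁻¹ * exp (-(1 / 2 - t) * x ^ 2) := by
    simp only [gaussianPDFReal, NNReal.coe_one, mul_one, sub_zero, mul_assoc, ← exp_add]
    ring_nf
  simp only [mgf, integral_gaussianReal_eq_integral_smul one_ne_zero, smul_eq_mul, hpdf,
    integral_const_mul, integral_gaussian]
  rw [← sqrt_inv, ← sqrt_mul (by positivity), ← sqrt_inv]
  congr 1
  field_simp

section SumOfSquares

variable {Ω ι : Type*} [MeasurableSpace Ω] [Fintype ι] {μ : Measure Ω} [IsProbabilityMeasure μ]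
  {G : ι → Ω → ℝ}

lemma iIndepFun.measureReal_sum_sq_ge_le_exp_mul (hindep : iIndepFun G μ)
    (hG : ∀ i, μ.map (G i) = gaussianReal 0 1) {t : ℝ} (ht₀ : 0 ≤ t) (ht : t < 1 / 2) (a : ℝ) :
    μ.real {ω | a ≤ ∑ i, G i ω ^ 2} ≤ exp (-t * a) * (√(1 - 2 * t))⁻¹ ^ Fintype.card ι := by
  have hmeas (i : ι) : AEMeasurable (G i) μ :=
    .of_map_ne_zero (hG i ▸ IsProbabilityMeasure.ne_zero _)
  have hmgf (i : ι) : mgf ((· ^ 2) ∘ G i) μ t = (√(1 - 2 * t))⁻¹ := by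
    rw [← mgf_sq_gaussianReal t, ← hG i, mgf_map (hmeas i) (by fun_prop)]
  have hmgf_sum : mgf (∑ i, (· ^ 2) ∘ G i) μ t = (√(1 - 2 * t))⁻¹ ^ Fintype.card ι := by
    rw [(hindep.comp (fun _ x ↦ x ^ 2) fun _ ↦ by fun_prop).mgf_sum₀
      (fun i ↦ (hmeas i).pow_const 2)]
    simp [hmgf]
  have hint : Integrable (fun ω ↦ exp (t * (∑ i, (· ^ 2) ∘ G i) ω)) μ := by
    have : 0 < 1 - 2 * t := by linarith
    exact mgf_pos_iff.1 (by rw [hmgf_sum]; positivity)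
  simpa [← hmgf_sum] using measure_ge_le_exp_mul_mgf a ht₀ hint

lemma iIndepFun.measureReal_sum_sq_ge_mul_card_le (hindep : iIndepFun G μ)
    (hG : ∀ i, μ.map (G i) = gaussianReal 0 1) {c : ℝ} (hc : 1 ≤ c) :
    μ.real {ω | c * Fintype.card ι ≤ ∑ i, G i ω ^ 2}
      ≤ (exp (-((c - 1) / 2)) * √c) ^ Fintype.card ι := by
  have hc₀ : 0 < c := by linarith
  -- the minimiser of `t ↦ exp (-t c) (1 - 2t)^(-1/2)`
  set t := (c - 1) / (2 * c) with ht_def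
  have ht : 1 - 2 * t = c⁻¹ := by rw [ht_def]; field_simp; ring
  have ht_lt : t < 1 / 2 := by rw [ht_def, div_lt_iff₀ (by positivity)]; linarith
  calc _ ≤ exp (-t * (c * Fintype.card ι)) * (√(1 - 2 * t))⁻¹ ^ Fintype.card ι :=
        hindep.measureReal_sum_sq_ge_le_exp_mul hG (by positivity) ht_lt _
    _ = (exp (-((c - 1) / 2)) * √c) ^ Fintype.card ι := by
      rw [ht, sqrt_inv, inv_inv, mul_pow, ← exp_nat_mul, ht_def]
      congr 2
      field_simp

end SumOfSquares

end ProbabilityTheory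

theorem chi_square_tail_laurent_massart_general
    {Ω : Type*} [MeasureSpace Ω] [IsProbabilityMeasure (ℙ : Measure Ω)]
    (k : ℕ) (hk : 1 ≤ k)
    (G : Fin k → Ω → ℝ)
    (hindep : iIndepFun G ℙ)
    (hGlaw : ∀ i, Measure.map (G i) ℙ = gaussianReal 0 1)
    (β : ℝ) (hβ : 0 < β) :
    ℙ {ω | (k : ℝ) + 2 * Real.sqrt (β * k) + 2 * β ≤ ∑ i, (G i ω) ^ 2}
      ≤ ENNReal.ofReal (Real.exp (-β)) := by
  have hk₀ : (0 : ℝ) < k := by exact_mod_cast hk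
  set s := √(β / k) with hs
  have hs₀ : 0 ≤ s := sqrt_nonneg _
  have hβs : β = k * s ^ 2 := by rw [hs, sq_sqrt (by positivity)]; field_simp
  have hthreshold : (k : ℝ) + 2 * √(β * k) + 2 * β = (1 + 2 * s + 2 * s ^ 2) * k := by
    rw [hβs, show k * s ^ 2 * k = (k * s) ^ 2 by ring, sqrt_sq (by positivity)]
    ring
  have hbound := hindep.measureReal_sum_sq_ge_mul_card_le hGlaw (c := 1 + 2 * s + 2 * s ^ 2)
    (by nlinarith)
  rw [Fintype.card_fin, ← hthreshold, show (1 + 2 * s + 2 * s ^ 2 - 1) / 2 = s + s ^ 2 by ring]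
    at hbound
  rw [← ofReal_measureReal]
  gcongr
  calc _ ≤ (exp (-(s + s ^ 2)) * √(1 + 2 * s + 2 * s ^ 2)) ^ k := hbound
    _ ≤ exp (-s ^ 2) ^ k := by gcongr; exact exp_neg_add_sq_mul_sqrt_le hs₀
    _ = exp (-β) := by rw [← exp_nat_mul, hβs, mul_neg]

/-- **Laurent–Massart chi-square tail bound.** If `G₁, …, G_k` are
independent standard Gaussian random variables (`k ≥ 1`), then for every `β > 0`,
`Pr[∑ i, G i ^ 2 ≥ k + 2√(βk) + 2β] ≤ exp (-β)`. -/
theorem chi_square_tail_laurent_massart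
    {Ω : Type*} [MeasureSpace Ω] [IsProbabilityMeasure (ℙ : Measure Ω)]
    (k : ℕ) (hk : 1 ≤ k)
    (G : Fin k → Ω → ℝ)
    (hGmeas : ∀ i, Measurable (G i))
    (hindep : iIndepFun G ℙ)
    (hGlaw : ∀ i, Measure.map (G i) ℙ = gaussianReal 0 1)
    (β : ℝ) (hβ : 0 < β) :
    ℙ {ω | (k : ℝ) + 2 * Real.sqrt (β * k) + 2 * β ≤ ∑ i, (G i ω) ^ 2}
      ≤ ENNReal.ofReal (Real.exp (-β)) :=
  chi_square_tail_laurent_massart_general k hk G hindep hGlaw β hβ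
end

section
/- (Truncation preserves approximate indistinguishability.) Let ε ∈ (0,1) and δ ∈ (0,1]. Let P' and Q' be probability measures on a common measurable space such that for every measurable event E, P'(E) ≤ e^ε Q'(E) + δ/2. Let A and A' be measurable sets with P'(A) = Q'(A') = r where 1 − r ≤ δ/(8e), and let P = P'(·|A) and Q = Q'(·|A') be the corresponding conditional probability measures. Then for every measurable event E, P(E) ≤ e^ε Q(E) + δ. -/
open MeasureTheory ProbabilityTheory

/-- **truncation preserves approximate indistinguishability.**
Let `ε ∈ (0,1)`, `δ ∈ (0,1]`, and let `P'`, `Q'` be probability measures on a common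
measurable space such that `P'(E) ≤ e^ε Q'(E) + δ/2` for every measurable `E`. If
`A`, `A'` are measurable sets with `P'(A) = Q'(A') = r` and `1 - r ≤ δ/(8e)`, then the
conditional measures `P = P'(·|A)` and `Q = Q'(·|A')` satisfy
`P(E) ≤ e^ε Q(E) + δ` for every measurable `E`. -/
theorem truncation_preserves_closeness
    {Ω : Type*} [MeasurableSpace Ω]
    (ε δ r : ℝ) (hε : ε ∈ Set.Ioo (0 : ℝ) 1) (hδ : δ ∈ Set.Ioc (0 : ℝ) 1)
    (P' Q' : Measure Ω) [IsProbabilityMeasure P'] [IsProbabilityMeasure Q']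
    (hclose : ∀ E : Set Ω, MeasurableSet E →
      P' E ≤ ENNReal.ofReal (Real.exp ε) * Q' E + ENNReal.ofReal (δ / 2))
    (A A' : Set Ω) (hA : MeasurableSet A) (hA' : MeasurableSet A')
    (hPA : P' A = ENNReal.ofReal r) (hQA : Q' A' = ENNReal.ofReal r)
    (hr : 1 - r ≤ δ / (8 * Real.exp 1)) :
    ∀ E : Set Ω, MeasurableSet E →
      ProbabilityTheory.cond P' A E
        ≤ ENNReal.ofReal (Real.exp ε) * ProbabilityTheory.cond Q' A' E
          + ENNReal.ofReal δ := by
  intro E hE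
  obtain ⟨hε0, hε1⟩ := hε
  obtain ⟨hδ0, hδ1⟩ := hδ
  have he2 : (2 : ℝ) ≤ Real.exp 1 := by
    have := Real.add_one_le_exp 1; linarith
  have hr1 : r ≤ 1 := by
    have h := prob_le_one (μ := P') (s := A)
    rw [hPA] at h
    exact_mod_cast ENNReal.ofReal_le_one.mp h
  have hrlb : 15/16 ≤ r := by
    have h1 : δ / (8 * Real.exp 1) ≤ 1 / 16 := by
      rw [div_le_div_iff₀ (by positivity) (by norm_num)]
      nlinarith
    linarith
  have hrpos : 0 < r := by linarith
  -- key real inequality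
  have hkey : Real.exp ε * (1 - r) + δ / 2 ≤ r * δ := by
    have hee : Real.exp ε ≤ Real.exp 1 := Real.exp_le_exp.mpr hε1.le
    have h1r : 0 ≤ 1 - r := by linarith
    have h2 : Real.exp ε * (1 - r) ≤ Real.exp 1 * (1 - r) := by nlinarith
    have h3 : Real.exp 1 * (1 - r) ≤ Real.exp 1 * (δ / (8 * Real.exp 1)) := by
      have := Real.exp_pos 1; nlinarith
    have h4 : Real.exp 1 * (δ / (8 * Real.exp 1)) = δ / 8 := by
      field_simp
    nlinarith
  -- main ENNReal inequality before dividing by r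
  have hmain : P' (A ∩ E) ≤ ENNReal.ofReal (Real.exp ε) * Q' (A' ∩ E)
      + ENNReal.ofReal (r * δ) := by
    have hQsplit : Q' E ≤ Q' (A' ∩ E) + ENNReal.ofReal (1 - r) := by
      have : Q' E ≤ Q' (A' ∩ E) + Q' A'ᶜ := by
        have : Q' E ≤ Q' ((A' ∩ E) ∪ A'ᶜ) := by
          apply measure_mono
          intro x hx
          by_cases hx' : x ∈ A'
          · exact Or.inl ⟨hx', hx⟩
          · exact Or.inr hx'
        exact this.trans (measure_union_le _ _)
      have hcompl : Q' A'ᶜ = ENNReal.ofReal (1 - r) := by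
        rw [measure_compl hA' (measure_ne_top _ _), hQA, measure_univ,
          ENNReal.ofReal_sub _ hrpos.le, ENNReal.ofReal_one]
      rwa [hcompl] at this
    calc P' (A ∩ E) ≤ P' E := measure_mono Set.inter_subset_right
      _ ≤ ENNReal.ofReal (Real.exp ε) * Q' E + ENNReal.ofReal (δ / 2) :=
          hclose E hE
      _ ≤ ENNReal.ofReal (Real.exp ε) * (Q' (A' ∩ E) + ENNReal.ofReal (1 - r))
            + ENNReal.ofReal (δ / 2) := by
          gcongr
      _ = ENNReal.ofReal (Real.exp ε) * Q' (A' ∩ E)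
            + (ENNReal.ofReal (Real.exp ε) * ENNReal.ofReal (1 - r)
              + ENNReal.ofReal (δ / 2)) := by ring
      _ ≤ ENNReal.ofReal (Real.exp ε) * Q' (A' ∩ E) + ENNReal.ofReal (r * δ) := by
          gcongr
          rw [← ENNReal.ofReal_mul (Real.exp_pos ε).le, ← ENNReal.ofReal_add
            (by nlinarith [Real.exp_pos ε]) (by linarith)]
          exact ENNReal.ofReal_le_ofReal hkey
  rw [cond_apply hA, cond_apply hA', hPA, hQA]
  have hrne : ENNReal.ofReal r ≠ 0 := by
    simp [ENNReal.ofReal_eq_zero, not_le, hrpos]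
  have hrnetop : ENNReal.ofReal r ≠ ⊤ := ENNReal.ofReal_ne_top
  calc (ENNReal.ofReal r)⁻¹ * P' (A ∩ E)
      ≤ (ENNReal.ofReal r)⁻¹ * (ENNReal.ofReal (Real.exp ε) * Q' (A' ∩ E)
          + ENNReal.ofReal (r * δ)) := by gcongr
    _ = ENNReal.ofReal (Real.exp ε) * ((ENNReal.ofReal r)⁻¹ * Q' (A' ∩ E))
          + (ENNReal.ofReal r)⁻¹ * ENNReal.ofReal (r * δ) := by ring
    _ = ENNReal.ofReal (Real.exp ε) * ((ENNReal.ofReal r)⁻¹ * Q' (A' ∩ E))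
          + ENNReal.ofReal δ := by
        rw [ENNReal.ofReal_mul hrpos.le, ← mul_assoc (ENNReal.ofReal r)⁻¹,
          ENNReal.inv_mul_cancel hrne hrnetop, one_mul]
end
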